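/- Let 𝒳 be a measurable space, μ a probability measure on 𝒳, and κ a Markov kernel from 𝒳 to ℝ, with joint law μ ⊗ κ (the composition-product). Assume that for μ-almost every x the cumulative distribution function F_{κ(x)}(y) = κ(x)((-∞, y]) is continuous. Then for every n ∈ ℕ, the pushforward of the n-fold product measure (μ ⊗ κ)^⊗n under the coordinatewise map ((x₁,y₁),…,(xₙ,yₙ)) ↦ (F_{κ(x₁)}(y₁),…,F_{κ(xₙ)}(yₙ)) equals the n-fold product of the uniform distribution on [0,1]. -/

import Mathlib

open MeasureTheory ProbabilityTheory Set Filter Topology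

lemma pit_single (ν : Measure ℝ) [IsProbabilityMeasure ν]
    (hF : Continuous fun y => (ν (Set.Iic y)).toReal) :
    ν.map (fun y => (ν (Set.Iic y)).toReal) = volume.restrict (Set.Icc (0:ℝ) 1) := by
  have hFeq : (fun y => (ν (Set.Iic y)).toReal) = cdf ν := by
    funext y; rw [cdf_eq_real, measureReal_def]
  rw [hFeq] at hF ⊢
  have hmeas : Measurable (cdf ν : ℝ → ℝ) := (monotone_cdf ν).measurable
  have key : ∀ t : ℝ, ν {y | cdf ν y ≤ t} = volume.restrict (Icc (0:ℝ) 1) (Iic t) := by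
    intro t
    rw [Measure.restrict_apply measurableSet_Iic]
    rcases lt_or_ge t 0 with ht | ht
    · have h1 : {y | cdf ν y ≤ t} = ∅ := eq_empty_of_forall_notMem fun y hy =>
        absurd (le_trans (cdf_nonneg ν y) hy) (not_le.2 ht)
      have h2 : Iic t ∩ Icc (0:ℝ) 1 = ∅ := eq_empty_of_forall_notMem fun x hx =>
        absurd (le_trans hx.2.1 hx.1) (not_le.2 ht)
      simp [h1, h2]
    rcases le_or_gt 1 t with ht1 | ht1
    · have h1 : {y | cdf ν y ≤ t} = univ := eq_univ_of_forall fun y =>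
        le_trans (cdf_le_one ν y) ht1
      have h2 : Iic t ∩ Icc (0:ℝ) 1 = Icc 0 1 :=
        inter_eq_self_of_subset_right (fun x hx => le_trans hx.2 ht1)
      simp [h1, h2]
    · -- 0 ≤ t < 1
      have h2 : Iic t ∩ Icc (0:ℝ) 1 = Icc 0 t := by
        ext x
        simp only [mem_inter_iff, mem_Iic, mem_Icc]
        exact ⟨fun h => ⟨h.2.1, h.1⟩, fun h => ⟨h.2, h.1, h.2.trans ht1.le⟩⟩
      rw [h2, Real.volume_Icc, sub_zero]
      set S : Set ℝ := {y | cdf ν y ≤ t} with hSdef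
      by_cases hS : S.Nonempty
      · have hclosed : IsClosed S := isClosed_Iic.preimage hF
        have hbdd : BddAbove S := by
          obtain ⟨b, hb⟩ := ((tendsto_cdf_atTop ν).eventually_const_lt ht1).exists
          refine ⟨b, fun y hy => le_of_not_gt fun hby => ?_⟩
          exact absurd (le_trans ((monotone_cdf ν) hby.le) hy) (not_le.2 hb)
        set s := sSup S with hsdef
        have hs_mem : s ∈ S := hclosed.csSup_mem hS hbdd
        have hst : cdf ν s = t := by
          refine le_antisymm hs_mem (le_of_not_gt fun hlt => ?_)
          have hopen : IsOpen ((cdf ν : ℝ → ℝ) ⁻¹' Iio t) := isOpen_Iio.preimage hF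
          obtain ⟨ε, hε, hball⟩ := Metric.isOpen_iff.1 hopen s hlt
          have hmem : s + ε / 2 ∈ S := by
            have hd : dist (s + ε / 2) s < ε := by
              rw [Real.dist_eq, add_sub_cancel_left, abs_of_nonneg (by linarith)]
              linarith
            have h3 : cdf ν (s + ε / 2) < t := hball (Metric.mem_ball.2 hd)
            exact h3.le
          have := le_csSup hbdd hmem
          linarith
        have hSIic : S = Iic s := by
          ext y
          exact ⟨fun hy => le_csSup hbdd hy,
            fun hy => le_trans ((monotone_cdf ν) hy) hs_mem⟩
        rw [hSdef, ← hSdef, hSIic, ← ofReal_cdf ν s, hst]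
      · have hSempty : S = ∅ := not_nonempty_iff_eq_empty.1 hS
        have ht0 : t = 0 := by
          by_contra h
          have htpos : 0 < t := lt_of_le_of_ne ht (Ne.symm h)
          obtain ⟨y, hy⟩ := ((tendsto_cdf_atBot ν).eventually_lt_const htpos).exists
          exact hS ⟨y, hy.le⟩
        rw [hSempty, ht0]
        simp
  have : IsProbabilityMeasure (ν.map (cdf ν : ℝ → ℝ)) :=
    Measure.isProbabilityMeasure_map hmeas.aemeasurable
  refine Measure.ext_of_Iic _ _ (fun a => ?_)
  rw [Measure.map_apply hmeas measurableSet_Iic]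
  exact key a

lemma pit_joint {𝒳 : Type*} [MeasurableSpace 𝒳]
    (μ : Measure 𝒳) [IsProbabilityMeasure μ]
    (κ : Kernel 𝒳 ℝ) [IsMarkovKernel κ]
    (hcont : ∀ᵐ x ∂μ, Continuous (fun y => (κ x (Set.Iic y)).toReal)) :
    (μ ⊗ₘ κ).map (fun p : 𝒳 × ℝ => (κ p.1 (Set.Iic p.2)).toReal)
      = volume.restrict (Set.Icc (0:ℝ) 1) := by
  have hmeasK : Measurable (fun p : 𝒳 × ℝ => κ p.1 (Set.Iic p.2)) := by
    have hs : MeasurableSet {q : (𝒳 × ℝ) × ℝ | q.2 ≤ q.1.2} :=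
      measurableSet_le measurable_snd measurable_fst.snd
    have h := Kernel.measurable_kernel_prodMk_left
      (κ := κ.comap Prod.fst measurable_fst) hs
    simpa [Kernel.comap_apply, Set.preimage, Set.Iic] using h
  have hg : Measurable (fun p : 𝒳 × ℝ => (κ p.1 (Set.Iic p.2)).toReal) :=
    hmeasK.ennreal_toReal
  have hjoint : IsProbabilityMeasure (μ ⊗ₘ κ) := inferInstance
  have : IsProbabilityMeasure ((μ ⊗ₘ κ).map
      (fun p : 𝒳 × ℝ => (κ p.1 (Set.Iic p.2)).toReal)) :=
    Measure.isProbabilityMeasure_map hg.aemeasurable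
  refine Measure.ext_of_Iic _ _ (fun t => ?_)
  rw [Measure.map_apply hg measurableSet_Iic,
    Measure.compProd_apply (hg measurableSet_Iic)]
  have hae : ∀ᵐ x ∂μ,
      κ x (Prod.mk x ⁻¹' ((fun p : 𝒳 × ℝ => (κ p.1 (Set.Iic p.2)).toReal) ⁻¹' Iic t))
        = volume.restrict (Icc (0:ℝ) 1) (Iic t) := by
    filter_upwards [hcont] with x hx
    have h1 := pit_single (κ x) hx
    have h2 : Prod.mk x ⁻¹' ((fun p : 𝒳 × ℝ => (κ p.1 (Set.Iic p.2)).toReal) ⁻¹' Iic t)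
        = (fun y => (κ x (Set.Iic y)).toReal) ⁻¹' Iic t := rfl
    rw [h2, ← Measure.map_apply hx.measurable measurableSet_Iic, h1]
  rw [lintegral_congr_ae hae, lintegral_const, measure_univ, mul_one]

/-- I.i.d. PIT values: if for `μ`-a.e. `x` the CDF of `κ x` is continuous, then for
every `n`, the coordinatewise PIT map pushes the `n`-fold product of the joint law
`μ ⊗ₘ κ` forward to the `n`-fold product of the uniform distribution on `[0,1]`. -/
theorem pit_iid_uniform
    {𝒳 : Type*} [MeasurableSpace 𝒳]
    (μ : Measure 𝒳) [IsProbabilityMeasure μ]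
    (κ : Kernel 𝒳 ℝ) [IsMarkovKernel κ]
    (hcont : ∀ᵐ x ∂μ, Continuous (fun y => (κ x (Set.Iic y)).toReal)) :
    ∀ n : ℕ,
      (Measure.pi (fun _ : Fin n => μ ⊗ₘ κ)).map
          (fun p (i : Fin n) => (κ (p i).1 (Set.Iic (p i).2)).toReal)
        = Measure.pi (fun _ : Fin n => volume.restrict (Set.Icc (0 : ℝ) 1)) := by
  intro n
  have h1 := pit_joint μ κ hcont
  have hmeasK : Measurable (fun p : 𝒳 × ℝ => κ p.1 (Set.Iic p.2)) := by
    have hs : MeasurableSet {q : (𝒳 × ℝ) × ℝ | q.2 ≤ q.1.2} :=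
      measurableSet_le measurable_snd measurable_fst.snd
    have h := Kernel.measurable_kernel_prodMk_left
      (κ := κ.comap Prod.fst measurable_fst) hs
    simpa [Kernel.comap_apply, Set.preimage, Set.Iic] using h
  have hg : Measurable (fun p : 𝒳 × ℝ => (κ p.1 (Set.Iic p.2)).toReal) :=
    hmeasK.ennreal_toReal
  have hprob : IsProbabilityMeasure ((μ ⊗ₘ κ).map
      (fun p : 𝒳 × ℝ => (κ p.1 (Set.Iic p.2)).toReal)) :=
    Measure.isProbabilityMeasure_map hg.aemeasurable
  have hG : Measurable (fun p : Fin n → 𝒳 × ℝ =>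
      fun i => (κ (p i).1 (Set.Iic (p i).2)).toReal) :=
    measurable_pi_lambda _ fun i => hg.comp (measurable_pi_apply i)
  rw [← h1]
  refine (Measure.pi_eq (μ := fun _ : Fin n => (μ ⊗ₘ κ).map
      (fun p : 𝒳 × ℝ => (κ p.1 (Set.Iic p.2)).toReal)) fun s hs => ?_).symm
  rw [Measure.map_apply hG (MeasurableSet.univ_pi hs)]
  have hpre : (fun p : Fin n → 𝒳 × ℝ =>
        fun i => (κ (p i).1 (Set.Iic (p i).2)).toReal) ⁻¹' Set.pi Set.univ s
      = Set.pi Set.univ (fun i =>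
          (fun q : 𝒳 × ℝ => (κ q.1 (Set.Iic q.2)).toReal) ⁻¹' s i) := by
    ext p; simp [Set.mem_pi]
  rw [hpre, Measure.pi_pi]
  exact Finset.prod_congr rfl fun i _ => (Measure.map_apply hg (hs i)).symm
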